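/- (Average-iterate CE for non-stationary multi-player general-sum matrix games, Appendix D.3.) Let m, T be positive integers, A_1,…,A_m finite nonempty action sets, and for each t ∈ {1,…,T} and player i let r_i^t : A_1 × ⋯ × A_m → [0,1] be reward functions. Let π^t = π_1^t ⊗ ⋯ ⊗ π_m^t be product distributions with π_i^t ∈ Δ(A_i), and Δ, ρ_1,…,ρ_m ≥ 0. Suppose Σ_{t=1}^{T−1} max_{i} max_{a} |r_i^{t+1}(a) − r_i^t(a)| ≤ Δ, and for each player i, max_{φ : A_i → A_i} (1/T) Σ_{t=1}^T E_{a ∼ π^t}[ r_i^t(φ(a_i), a_{-i}) ] − (1/T) Σ_{t=1}^T E_{a ∼ π^t}[ r_i^t(a) ] ≤ ρ_i. Then the averaged joint distribution π̄ = (1/T) Σ_{t=1}^T π^t satisfies, for every player i, max_{φ : A_i → A_i} E_{a ∼ π̄}[ r_i^T(φ(a_i), a_{-i}) ] − E_{a ∼ π̄}[ r_i^T(a) ] ≤ ρ_i + 2Δ. -/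

import Mathlib

/-!
Write `E_t[f]` for the expectation of `f` under the product distribution `π^t`. Since the
rewards drift by at most `Δ` in total, `|r^T(a) - r^t(a)| ≤ Δ` for every `t ≤ T`, so replacing
`r^T` by `r^t` inside each `E_t` costs at most `Δ`, before and after the deviation `φ`. The
expectation under `π̄` is the time average of the `E_t`, and for the time-varying rewards
`r^t` the deviation gain of that average is exactly the swap regret, at most `ρ_i`.
-/

open Finset

theorem abs_sub_le_sum_sup'_abs_sub {ι : Type*} {s : Finset ι} (hs : s.Nonempty)
    (f : ℕ → ι → ℝ) {t T : ℕ} (ht : 1 ≤ t) (htT : t ≤ T) {x : ι} (hx : x ∈ s) :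
    |f T x - f t x| ≤ ∑ k ∈ Icc 1 (T - 1), s.sup' hs fun y => |f (k + 1) y - f k y| := by
  have hsup_nonneg : ∀ k, 0 ≤ s.sup' hs fun y => |f (k + 1) y - f k y| :=
    fun k => (abs_nonneg _).trans (le_sup' (fun y => |f (k + 1) y - f k y|) hx)
  calc |f T x - f t x| = dist (f t x) (f T x) := by rw [Real.dist_eq, abs_sub_comm]
    _ ≤ ∑ k ∈ Ico t T, dist (f k x) (f (k + 1) x) := dist_le_Ico_sum_dist (f · x) htT
    _ ≤ ∑ k ∈ Ico t T, s.sup' hs fun y => |f (k + 1) y - f k y| := by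
        gcongr with k
        rw [Real.dist_eq, abs_sub_comm]
        exact le_sup' (fun y => |f (k + 1) y - f k y|) hx
    _ ≤ ∑ k ∈ Icc 1 (T - 1), s.sup' hs fun y => |f (k + 1) y - f k y| := by
        refine sum_le_sum_of_subset_of_nonneg (fun k hk => ?_) fun k _ _ => hsup_nonneg k
        rw [mem_Ico] at hk
        rw [mem_Icc]
        omega

theorem Fintype.sum_prod_eq_one {ι : Type*} [Fintype ι] [DecidableEq ι] {A : ι → Type*}
    [∀ i, Fintype (A i)] {p : (i : ι) → A i → ℝ} (hp : ∀ i, ∑ a, p i a = 1) :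
    ∑ a : (i : ι) → A i, ∏ i, p i (a i) = 1 := by
  rw [← Fintype.prod_sum, Finset.prod_eq_one fun i _ => hp i]

section Expectation

variable {Ω τ : Type*} [Fintype Ω]

theorem sum_mul_le_sum_mul_add {w f g : Ω → ℝ} {c : ℝ} (hw0 : ∀ a, 0 ≤ w a)
    (hw1 : ∑ a, w a = 1) (hfg : ∀ a, f a ≤ g a + c) :
    ∑ a, w a * f a ≤ ∑ a, w a * g a + c :=
  calc ∑ a, w a * f a ≤ ∑ a, w a * (g a + c) :=
        sum_le_sum fun a _ => mul_le_mul_of_nonneg_left (hfg a) (hw0 a)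
    _ = ∑ a, w a * g a + c := by simp only [mul_add, sum_add_distrib, ← sum_mul, hw1, one_mul]

theorem average_sum_mul_le_add {s : Finset τ} (hs : s.Nonempty) {w f g : τ → Ω → ℝ} {c : ℝ}
    (hw0 : ∀ t ∈ s, ∀ a, 0 ≤ w t a) (hw1 : ∀ t ∈ s, ∑ a, w t a = 1)
    (hfg : ∀ t ∈ s, ∀ a, f t a ≤ g t a + c) :
    (1 / #s : ℝ) * ∑ t ∈ s, ∑ a, w t a * f t a
      ≤ (1 / #s : ℝ) * ∑ t ∈ s, ∑ a, w t a * g t a + c := by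
  have hcard : (0 : ℝ) < #s := by exact_mod_cast hs.card_pos
  calc (1 / #s : ℝ) * ∑ t ∈ s, ∑ a, w t a * f t a
      ≤ (1 / #s : ℝ) * ∑ t ∈ s, (∑ a, w t a * g t a + c) := by
        gcongr with t ht
        exact sum_mul_le_sum_mul_add (hw0 t ht) (hw1 t ht) (hfg t ht)
    _ = (1 / #s : ℝ) * ∑ t ∈ s, ∑ a, w t a * g t a + c := by
        rw [sum_add_distrib, sum_const, nsmul_eq_mul, mul_add]
        field_simp

theorem sum_const_mul_sum_mul (s : Finset τ) (c : ℝ) (w : τ → Ω → ℝ) (F : Ω → ℝ) :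
    ∑ a, (c * ∑ t ∈ s, w t a) * F a = c * ∑ t ∈ s, ∑ a, w t a * F a := by
  simp_rw [mul_assoc, ← mul_sum, sum_mul]
  rw [sum_comm]

end Expectation

/-- (Average-iterate CE for non-stationary multi-player general-sum matrix games,
Appendix D.3.) If each player i runs a no-swap-regret algorithm producing product
distributions π^t = ⊗_i π_i^t for the non-stationary rewards r^t with total variation at
most Δ, then the averaged joint distribution π̄ = (1/T)Σ_t π^t has CE gap (over strategy
modifications φ : A_i → A_i) at most ρ_i + 2Δ for each player i in the final game r^T. -/
theorem stmt_7 (m T : ℕ) (hm : 0 < m) (hT : 0 < T)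
    (A : Fin m → Type*) [∀ i, Fintype (A i)] [∀ i, Nonempty (A i)] [∀ i, DecidableEq (A i)]
    (r : ℕ → (i : Fin m) → ((j : Fin m) → A j) → ℝ)
    (π : ℕ → (i : Fin m) → A i → ℝ)
    (hπ0 : ∀ t ∈ Finset.Icc 1 T, ∀ i a, 0 ≤ π t i a)
    (hπ1 : ∀ t ∈ Finset.Icc 1 T, ∀ i, ∑ a, π t i a = 1)
    (Δ : ℝ) (ρ : Fin m → ℝ)
    (hvar : ∑ t ∈ Finset.Icc 1 (T - 1),
        (Finset.univ : Finset (Fin m × ((j : Fin m) → A j))).sup'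
          (by have : Nonempty (Fin m) := ⟨⟨0, hm⟩⟩
              exact Finset.univ_nonempty)
          (fun p => |r (t + 1) p.1 p.2 - r t p.1 p.2|) ≤ Δ)
    (hreg : ∀ i,
        (Finset.univ : Finset (A i → A i)).sup' Finset.univ_nonempty (fun φ =>
          (1 / (T : ℝ)) * ∑ t ∈ Finset.Icc 1 T, ∑ a : (j : Fin m) → A j,
            (∏ j, π t j (a j)) * r t i (Function.update a i (φ (a i))))
        - (1 / (T : ℝ)) * ∑ t ∈ Finset.Icc 1 T, ∑ a : (j : Fin m) → A j,
            (∏ j, π t j (a j)) * r t i a ≤ ρ i) :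
    ∀ i,
      (Finset.univ : Finset (A i → A i)).sup' Finset.univ_nonempty (fun φ =>
        ∑ a : (j : Fin m) → A j,
          ((1 / (T : ℝ)) * ∑ t ∈ Finset.Icc 1 T, ∏ j, π t j (a j))
            * r T i (Function.update a i (φ (a i))))
      - ∑ a : (j : Fin m) → A j,
          ((1 / (T : ℝ)) * ∑ t ∈ Finset.Icc 1 T, ∏ j, π t j (a j)) * r T i a
      ≤ ρ i + 2 * Δ := by
  intro i
  have hw0 (t) (ht : t ∈ Icc 1 T) (a : (j : Fin m) → A j) : 0 ≤ ∏ j, π t j (a j) :=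
    prod_nonneg fun j _ => hπ0 t ht j (a j)
  have hw1 (t) (ht : t ∈ Icc 1 T) : ∑ a : (j : Fin m) → A j, ∏ j, π t j (a j) = 1 :=
    Fintype.sum_prod_eq_one (hπ1 t ht)
  have hdrift (t) (ht : t ∈ Icc 1 T) (a : (j : Fin m) → A j) : |r T i a - r t i a| ≤ Δ :=
    le_trans (abs_sub_le_sum_sup'_abs_sub (s := univ) _
      (fun k (p : Fin m × ((j : Fin m) → A j)) => r k p.1 p.2)
      (mem_Icc.1 ht).1 (mem_Icc.1 ht).2 (mem_univ (i, a))) hvar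
  have hIcc : (Icc 1 T).Nonempty := nonempty_Icc.2 hT
  have hcard : ((#(Icc 1 T) : ℕ) : ℝ) = T := by simp
  rw [sub_le_iff_le_add]
  refine sup'_le _ _ fun φ _ => ?_
  rw [sum_const_mul_sum_mul, sum_const_mul_sum_mul]
  have hdev := average_sum_mul_le_add hIcc hw0 hw1 (c := Δ)
    (f := fun _ a => r T i (Function.update a i (φ (a i))))
    (g := fun t a => r t i (Function.update a i (φ (a i))))
    fun t ht a => by linarith [abs_le.1 (hdrift t ht (Function.update a i (φ (a i))))]
  have hplay := average_sum_mul_le_add hIcc hw0 hw1 (c := Δ)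
    (f := fun t a => r t i a) (g := fun _ a => r T i a)
    fun t ht a => by linarith [abs_le.1 (hdrift t ht a)]
  rw [hcard] at hdev hplay
  have hgain := (sub_le_sub_right (le_sup' _ (mem_univ φ)) _).trans (hreg i)
  linarith
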